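/- arXiv:2112.04166 — 2 statements merged into one kernel-verified Lean document; each statement's English description precedes it below -/
import Mathlib

section
/- Every allocation satisfying WEF(1,0) is 1/n-NMMS. -/
open Finset

/-- An allocation: a partition of the item set `Fin m` into `n` (possibly empty) bundles. -/
def IsAllocation {n m : ℕ} (A : Fin n → Finset (Fin m)) : Prop :=
  (∀ i j : Fin n, i ≠ j → Disjoint (A i) (A j)) ∧
    Finset.univ.biUnion A = (Finset.univ : Finset (Fin m))

/-- Additive utility of agent `i` for a bundle `S`. -/
def util {n m : ℕ} (u : Fin n → Fin m → ℝ) (i : Fin n) (S : Finset (Fin m)) : ℝ :=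
  ∑ g ∈ S, u i g

/-- Weighted envy-freeness up to (x, y)-fraction of one item. -/
def WEF {n m : ℕ} (w : Fin n → ℝ) (u : Fin n → Fin m → ℝ) (A : Fin n → Finset (Fin m))
    (x y : ℝ) : Prop :=
  ∀ i j : Fin n, ∃ B : Finset (Fin m), B ⊆ A j ∧ B.card ≤ 1 ∧
    (util u i (A i) + y * util u i B) / w i ≥ (util u i (A j) - x * util u i B) / w j

/-- Weighted proportionality up to (x, y)-fraction of one item. -/
def WPROP {n m : ℕ} (w : Fin n → ℝ) (u : Fin n → Fin m → ℝ) (A : Fin n → Finset (Fin m))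
    (x y : ℝ) : Prop :=
  ∀ i : Fin n, ∃ B : Finset (Fin m), B ⊆ Finset.univ \ A i ∧ B.card ≤ 1 ∧
    (util u i (A i) + y * util u i B) / w i ≥
      (util u i Finset.univ - (n : ℝ) * x * util u i B) / (∑ j, w j)

/-- The stronger notion WPROP*(x,y). -/
def WPROPstar {n m : ℕ} (w : Fin n → ℝ) (u : Fin n → Fin m → ℝ) (A : Fin n → Finset (Fin m))
    (x y : ℝ) : Prop :=
  ∀ i : Fin n, ∃ B : Finset (Fin m), B ⊆ Finset.univ \ A i ∧ B.card ≤ 1 ∧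
    ∃ Bf : Fin n → Finset (Fin m),
      (∀ j : Fin n, j ≠ i → Bf j ⊆ A j ∧ (Bf j).card ≤ 1) ∧
      (util u i (A i) + y * util u i B) / w i ≥
        (util u i Finset.univ - x * ∑ j ∈ Finset.univ.erase i, util u i (Bf j)) / (∑ j, w j)

/-- The (1-out-of-n) maximin share of agent `i`. -/
noncomputable def MMS {n m : ℕ} (u : Fin n → Fin m → ℝ) (i : Fin n) : ℝ :=
  sSup {v : ℝ | ∃ Z : Fin n → Finset (Fin m), IsAllocation Z ∧ v = ⨅ j, util u i (Z j)}

/-- The normalized maximin share of agent `i`. -/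
noncomputable def NMMS {n m : ℕ} (w : Fin n → ℝ) (u : Fin n → Fin m → ℝ) (i : Fin n) : ℝ :=
  (w i / ∑ j, w j) * (n : ℝ) * MMS u i

/-- The weighted maximin share of agent `i`. -/
noncomputable def WMMS {n m : ℕ} (w : Fin n → ℝ) (u : Fin n → Fin m → ℝ) (i : Fin n) : ℝ :=
  w i * sSup {v : ℝ | ∃ Z : Fin n → Finset (Fin m), IsAllocation Z ∧
    v = ⨅ j, util u i (Z j) / w j}

/-
If agent `i` removes from every other bundle the item that the WEF(1,0) condition lets her
discard, at most `n - 1` items are removed, and the rest of the goods is worth at most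
`w_N / w_i · u_i(A_i)` to her. Any partition into `n` bundles has a bundle avoiding the
removed items, so `MMS_i` is at most that value too, which is the claimed bound.
-/

open Function

theorem Finset.exists_disjoint_of_card_lt_card {ι α : Type*} [Fintype ι]
    {Z : ι → Finset α} (hZ : Pairwise (Disjoint on Z)) {T : Finset α}
    (hT : #T < Fintype.card ι) : ∃ k, Disjoint (Z k) T := by
  by_contra! hmeet
  simp only [Finset.not_disjoint_iff] at hmeet
  choose g hgZ hgT using hmeet
  have hinj : Set.InjOn g (univ : Finset ι) := fun k _ l _ hkl =>
    hZ.eq (Finset.not_disjoint_iff.mpr ⟨g k, hgZ k, hkl ▸ hgZ l⟩)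
  have := card_le_card_of_injOn g (fun k _ => hgT k) hinj
  rw [card_univ] at this
  omega

section Util

variable {n m : ℕ} {u : Fin n → Fin m → ℝ} {i : Fin n}

theorem util_nonneg (hu : ∀ g, 0 ≤ u i g) (S : Finset (Fin m)) : 0 ≤ util u i S :=
  sum_nonneg fun g _ => hu g

theorem util_mono (hu : ∀ g, 0 ≤ u i g) {S T : Finset (Fin m)} (h : S ⊆ T) :
    util u i S ≤ util u i T :=
  sum_le_sum_of_subset_of_nonneg h fun g _ _ => hu g

theorem util_sdiff {S T : Finset (Fin m)} (h : T ⊆ S) :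
    util u i (S \ T) = util u i S - util u i T :=
  sum_sdiff_eq_sub h

theorem IsAllocation.sum_util_sdiff {A : Fin n → Finset (Fin m)} (hA : IsAllocation A)
    (T : Finset (Fin m)) : ∑ j, util u i (A j \ T) = util u i (univ \ T) := by
  have hcover : univ.biUnion (fun j => A j \ T) = univ \ T := by
    ext g
    have hg : g ∈ univ.biUnion A := hA.2 ▸ mem_univ g
    simp only [mem_biUnion, mem_univ, true_and, mem_sdiff] at hg ⊢
    exact ⟨fun ⟨_, _, hgT⟩ => hgT, fun hgT => (hg.imp fun _ hgj => ⟨hgj, hgT⟩)⟩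
  rw [← hcover, util, sum_biUnion fun j _ k _ hjk => (hA.1 j k hjk).mono sdiff_subset sdiff_subset]
  rfl

theorem MMS_le_util_compl (hu : ∀ g, 0 ≤ u i g) {T : Finset (Fin m)} (hT : #T < n) :
    MMS u i ≤ util u i (univ \ T) := by
  refine Real.sSup_le ?_ (util_nonneg hu _)
  rintro _ ⟨Z, hZ, rfl⟩
  obtain ⟨k, hk⟩ := exists_disjoint_of_card_lt_card (Z := Z) (fun j k hjk => hZ.1 j k hjk)
    (by rwa [Fintype.card_fin])
  calc ⨅ j, util u i (Z j)
      ≤ util u i (Z k) := ciInf_le ⟨0, by rintro _ ⟨j, rfl⟩; exact util_nonneg hu _⟩ k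
    _ ≤ util u i (univ \ T) := util_mono hu (subset_sdiff.mpr ⟨subset_univ _, hk⟩)

end Util

section WEF

variable {n m : ℕ} {w : Fin n → ℝ} {u : Fin n → Fin m → ℝ} {A : Fin n → Finset (Fin m)}

theorem WEF.exists_util_sdiff_div_le (hWEF : WEF w u A 1 0) (i j : Fin n) :
    ∃ B ⊆ A j, #B ≤ 1 ∧ util u i (A j \ B) / w j ≤ util u i (A i) / w i := by
  obtain ⟨B, hBA, hBcard, hB⟩ := hWEF i j
  refine ⟨B, hBA, hBcard, ?_⟩
  rw [util_sdiff hBA]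
  simpa using hB

theorem MMS_div_sum_le_of_WEF (hw : ∀ j, 0 < w j) (hA : IsAllocation A)
    (hWEF : WEF w u A 1 0) {i : Fin n} (hu : ∀ g, 0 ≤ u i g) :
    MMS u i / ∑ j, w j ≤ util u i (A i) / w i := by
  choose B hBA hBcard hB using hWEF.exists_util_sdiff_div_le i
  set T := (univ.erase i).biUnion B
  have hTcard : #T < n := by
    calc #T ≤ #(univ.erase i) * 1 := card_biUnion_le_card_mul _ _ _ fun j _ => hBcard j
      _ < n := by simpa [card_erase_of_mem] using i.pos
  have hbundle : ∀ j, util u i (A j \ T) ≤ w j * (util u i (A i) / w i) := by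
    intro j
    by_cases hji : j = i
    · subst j
      rw [mul_div_cancel₀ _ (hw i).ne']
      exact util_mono hu sdiff_subset
    · calc util u i (A j \ T)
          ≤ util u i (A j \ B j) :=
            util_mono hu (sdiff_subset_sdiff le_rfl (subset_biUnion_of_mem B (by simpa)))
        _ ≤ w j * (util u i (A i) / w i) := (div_le_iff₀' (hw j)).mp (hB j)
  rw [div_le_iff₀' (sum_pos (fun j _ => hw j) ⟨i, mem_univ i⟩)]
  calc MMS u i
      ≤ util u i (univ \ T) := MMS_le_util_compl hu hTcard
    _ = ∑ j, util u i (A j \ T) := (hA.sum_util_sdiff T).symm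
    _ ≤ ∑ j, w j * (util u i (A i) / w i) := sum_le_sum fun j _ => hbundle j
    _ = (∑ j, w j) * (util u i (A i) / w i) := (sum_mul _ _ _).symm

end WEF

theorem wef1_implies_inv_n_nmms_general (n m : ℕ)
    (w : Fin n → ℝ) (hw : ∀ i, 0 < w i)
    (u : Fin n → Fin m → ℝ) (hu : ∀ i g, 0 ≤ u i g)
    (A : Fin n → Finset (Fin m)) (hA : IsAllocation A)
    (hWEF : WEF w u A 1 0) :
    ∀ i, util u i (A i) ≥ (1 / (n : ℝ)) * NMMS w u i := by
  intro i
  have hn : (n : ℝ) ≠ 0 := Nat.cast_ne_zero.mpr i.pos.ne'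
  calc (1 / (n : ℝ)) * NMMS w u i
      = w i * (MMS u i / ∑ j, w j) := by rw [NMMS]; field_simp
    _ ≤ w i * (util u i (A i) / w i) :=
        mul_le_mul_of_nonneg_left (MMS_div_sum_le_of_WEF hw hA hWEF (hu i)) (hw i).le
    _ = util u i (A i) := mul_div_cancel₀ _ (hw i).ne'

/-- Every WEF(1,0) allocation is 1/n-NMMS. -/
theorem wef1_implies_inv_n_nmms (n m : ℕ) (hn : 2 ≤ n)
    (w : Fin n → ℝ) (hw : ∀ i, 0 < w i)
    (u : Fin n → Fin m → ℝ) (hu : ∀ i g, 0 ≤ u i g)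
    (A : Fin n → Finset (Fin m)) (hA : IsAllocation A)
    (hWEF : WEF w u A 1 0) :
    ∀ i, util u i (A i) ≥ (1 / (n : ℝ)) * NMMS w u i :=
  wef1_implies_inv_n_nmms_general n m w hw u hu A hA hWEF
end

section
/- In an instance in which all items are identical, every allocation satisfying WEF(1,0) satisfies upper quota, i.e., |A_i| ≤ ⌈q_i⌉ for every agent i. -/
open Finset

/-! With identical items, WEF(1,0) from agent `j` towards agent `i` says
`(|A_i| - 1) w_j ≤ |A_j| w_i`. Summing over `j ≠ i` and using `∑ |A_j| = m` gives
`(|A_i| - 1) w_N ≤ (m - 1) w_i < m w_i`, i.e. `|A_i| - 1 < q_i`, which is `|A_i| ≤ ⌈q_i⌉`. -/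

theorem IsAllocation.sum_card {n m : ℕ} {A : Fin n → Finset (Fin m)} (hA : IsAllocation A) :
    ∑ j, (A j).card = m := by
  rw [← card_biUnion fun a _ b _ hab => hA.1 a b hab, hA.2, card_univ, Fintype.card_fin]

theorem WEF.card_sub_mul_le_card_add_mul {n m : ℕ} {w : Fin n → ℝ} (hw : ∀ i, 0 < w i)
    {A : Fin n → Finset (Fin m)} {x y : ℝ} (hx : 0 ≤ x) (hy : 0 ≤ y)
    (hWEF : WEF w (fun _ _ => (1 : ℝ)) A x y) (i j : Fin n) :
    ((A i).card - x) * w j ≤ ((A j).card + y) * w i := by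
  obtain ⟨B, -, hB, hineq⟩ := hWEF j i
  simp only [util, sum_const, nsmul_eq_mul, mul_one] at hineq
  have hB' : (B.card : ℝ) ≤ 1 := by exact_mod_cast hB
  have h := (div_le_div_iff₀ (hw i) (hw j)).mp hineq
  nlinarith [hw i, hw j, mul_nonneg hx (hw j).le, mul_nonneg hy (hw i).le]

theorem sub_one_lt_quota_of_forall_le {ι : Type*} [Fintype ι] [DecidableEq ι] {w a : ι → ℝ}
    (hw : ∀ i, 0 < w i) (i : ι) (h : ∀ j, (a i - 1) * w j ≤ a j * w i) :
    a i - 1 < w i / (∑ j, w j) * ∑ j, a j := by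
  have hW : 0 < ∑ j, w j := sum_pos (fun j _ => hw j) ⟨i, mem_univ i⟩
  have hsum : (a i - 1) * ∑ j ∈ univ.erase i, w j ≤ (∑ j ∈ univ.erase i, a j) * w i := by
    rw [mul_sum, sum_mul]
    exact sum_le_sum fun j _ => h j
  rw [sum_erase_eq_sub (mem_univ i), sum_erase_eq_sub (mem_univ i)] at hsum
  rw [div_mul_eq_mul_div, lt_div_iff₀ hW]
  nlinarith [hw i]

theorem wef10_upper_quota_general (n m : ℕ)
    (w : Fin n → ℝ) (hw : ∀ i, 0 < w i)
    (A : Fin n → Finset (Fin m)) (hA : IsAllocation A)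
    (hWEF : WEF w (fun _ _ => (1 : ℝ)) A 1 0) :
    ∀ i : Fin n, ((A i).card : ℤ) ≤ ⌈(w i / ∑ j, w j) * (m : ℝ)⌉ := by
  intro i
  have hpair : ∀ j, ((A i).card - 1 : ℝ) * w j ≤ (A j).card * w i := fun j => by
    simpa using hWEF.card_sub_mul_le_card_add_mul hw zero_le_one le_rfl i j
  have hm : (m : ℝ) = ∑ j, ((A j).card : ℝ) := by exact_mod_cast hA.sum_card.symm
  rw [Int.le_ceil_iff, hm]
  push_cast
  exact sub_one_lt_quota_of_forall_le (a := fun j => ((A j).card : ℝ)) hw i hpair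

/-- With identical items, every WEF(1,0) allocation satisfies upper quota. -/
theorem wef10_upper_quota (n m : ℕ) (hn : 2 ≤ n)
    (w : Fin n → ℝ) (hw : ∀ i, 0 < w i)
    (A : Fin n → Finset (Fin m)) (hA : IsAllocation A)
    (hWEF : WEF w (fun _ _ => (1 : ℝ)) A 1 0) :
    ∀ i : Fin n, ((A i).card : ℤ) ≤ ⌈(w i / ∑ j, w j) * (m : ℝ)⌉ :=
  wef10_upper_quota_general n m w hw A hA hWEF
end
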